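/- Let J : A × A → A be a Jordan biderivation with J(e, e) = 0. Then for all m, m' ∈ A₁₂ and n, n' ∈ A₂₁: J(n, n') = eJ(n, n')e' + e'J(n, n')e + [n', J(n, e)] = eJ(n, n')e' + e'J(n, n')e + [n, J(e, n')], and J(m, m') = eJ(m, m')e' + e'J(m, m')e + [J(e, m'), m] = eJ(m, m')e' + e'J(m, m')e + [J(m, e), m']. -/

import Mathlib

/-!
For fixed `n` the map `J n` is a Jordan derivation, and so is `J · n'`; each of the four
identities is one fact about a Jordan derivation `D`, an idempotent `f` (`e` or `1 - e`) and
`x ∈ (1 - f) A f`. Squaring `f` puts `D f` in the off-diagonal Peirce spaces of `f`, and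
linearizing `D (x * x)` at `x * f + f * x = x` pins down the diagonal corners of `D x`:
`f (D x) f = -(D f) x` and `(1 - f) (D x) (1 - f) = x (D f)`.
-/

section JordanDerivation

variable {A : Type*} [Ring A]

theorem IsIdempotentElem.mul_mul_eq_zero_of_eq_mul_add_mul {f a : A}
    (hf : IsIdempotentElem f) (ha : a = f * a + a * f) : f * a * f = 0 := by
  have hf' : f * f = f := hf
  linear_combination (norm := noncomm_ring) -(f * ha * f) - hf' * (a * f) - f * a * hf'

theorem IsIdempotentElem.one_sub_mul_mul_eq_zero_of_eq_mul_add_mul {f a : A}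
    (hf : IsIdempotentElem f) (ha : a = f * a + a * f) : (1 - f) * a * (1 - f) = 0 := by
  have hf' : f * f = f := hf
  linear_combination (norm := noncomm_ring)
    (1 - f) * ha * (1 - f) - hf' * (a * (1 - f)) - (1 - f) * a * hf'

def IsJordanDerivation (D : A →+ A) : Prop :=
  ∀ x, D (x * x) = x * D x + D x * x

namespace IsJordanDerivation

variable {D : A →+ A}

theorem map_one (hD : IsJordanDerivation D) : D 1 = 0 := by
  have h := hD 1
  rw [one_mul, mul_one, one_mul] at h
  exact right_eq_add.mp h

theorem map_one_sub (hD : IsJordanDerivation D) (f : A) : D (1 - f) = -D f := by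
  rw [map_sub, hD.map_one, zero_sub]

theorem map_mul_add_mul (hD : IsJordanDerivation D) (x y : A) :
    D (x * y + y * x) = D x * y + x * D y + D y * x + y * D x := by
  have h := hD (x + y)
  have hsq : (x + y) * (x + y) = x * x + (x * y + y * x) + y * y := by noncomm_ring
  simp only [hsq, map_add] at h
  rw [hD x, hD y] at h
  rw [map_add]
  linear_combination (norm := noncomm_ring) h

theorem map_eq_of_isIdempotentElem (hD : IsJordanDerivation D) {f : A} (hf : IsIdempotentElem f) :
    D f = f * D f + D f * f := by
  simpa only [hf.eq] using hD f

theorem map_eq_of_one_sub_mul_mul_eq (hD : IsJordanDerivation D) {f x : A}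
    (hf : IsIdempotentElem f) (hx : (1 - f) * x * f = x) :
    D x = f * D x * (1 - f) + (1 - f) * D x * f + (x * D f - D f * x) := by
  have hf' : f * f = f := hf
  have hfx : f * x = 0 := by
    linear_combination (norm := noncomm_ring) -(f * hx) - hf' * (x * f)
  have hxf : x * f = x := by
    linear_combination (norm := noncomm_ring) (1 - f) * x * hf' + hx - hx * f
  have hDf := hD.map_eq_of_isIdempotentElem hf
  have hfDff := hf.mul_mul_eq_zero_of_eq_mul_add_mul hDf
  have hgDfg := hf.one_sub_mul_mul_eq_zero_of_eq_mul_add_mul hDf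
  have hDx : D x = D x * f + x * D f + D f * x + f * D x := by
    simpa only [hxf, hfx, add_zero] using hD.map_mul_add_mul x f
  have hDfx : D f * x = f * D f * x := by
    linear_combination (norm := noncomm_ring) hgDfg * x + ((1 - f) * D f) * hfx
  have hxDf : x * D f * f = 0 := by
    linear_combination (norm := noncomm_ring) x * hfDff - hxf * (D f * f)
  have hcorner : f * D x * f = -(D f * x) := by
    linear_combination (norm := noncomm_ring)
      -(f * hDx * f) - hf' * (D x * f) - (f * D x) * hf' - hfx * (D f * f) - (f * D f) * hxf
      + hDfx
  have hcorner' : (1 - f) * D x * (1 - f) = x * D f := by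
    linear_combination (norm := noncomm_ring)
      (1 - f) * hDx * (1 - f) - hf' * (D x * (1 - f)) - (1 - f) * D x * hf' - hxDf
      - hfx * (D f * (1 - f)) + hDfx - hDfx * f
  linear_combination (norm := noncomm_ring) hcorner + hcorner'

end IsJordanDerivation

end JordanDerivation

theorem jordan_biderivation_offdiagonal_pairs_general
    (R A : Type*) [CommRing R] [Ring A] [Algebra R A]
    -- `e` is a nontrivial idempotent:
    (e : A) (he : e * e = e)
    (J : A →ₗ[R] A →ₗ[R] A)
    -- `J` is a Jordan biderivation:
    (hJ1 : ∀ x y : A, J (x * x) y = x * J x y + J x y * x)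
    (hJ2 : ∀ x y : A, J x (y * y) = y * J x y + J x y * y) :
    ∀ m m' n n' : A,
      e * m * (1 - e) = m → e * m' * (1 - e) = m' →
      (1 - e) * n * e = n → (1 - e) * n' * e = n' →
      J n n' = e * J n n' * (1 - e) + (1 - e) * J n n' * e + (n' * J n e - J n e * n') ∧
      J n n' = e * J n n' * (1 - e) + (1 - e) * J n n' * e + (n * J e n' - J e n' * n) ∧
      J m m' = e * J m m' * (1 - e) + (1 - e) * J m m' * e + (J e m' * m - m * J e m') ∧
      J m m' = e * J m m' * (1 - e) + (1 - e) * J m m' * e + (J m e * m' - m' * J m e) := by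
  intro m m' n n' hm hm' hn hn'
  have hJ : ∀ x, IsJordanDerivation (J x).toAddMonoidHom := fun x y => hJ2 x y
  have hJflip : ∀ y, IsJordanDerivation (J.flip y).toAddMonoidHom := fun y x => hJ1 x y
  have he' : IsIdempotentElem (1 - e) := IsIdempotentElem.one_sub he
  have hm₁ : (1 - (1 - e)) * m * (1 - e) = m := by rwa [sub_sub_cancel]
  have hm₂ : (1 - (1 - e)) * m' * (1 - e) = m' := by rwa [sub_sub_cancel]
  have h1 := (hJ n).map_eq_of_one_sub_mul_mul_eq he hn'
  have h2 := (hJflip n').map_eq_of_one_sub_mul_mul_eq he hn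
  have h3 := (hJflip m').map_eq_of_one_sub_mul_mul_eq he' hm₁
  have h4 := (hJ m).map_eq_of_one_sub_mul_mul_eq he' hm₂
  rw [(hJflip m').map_one_sub] at h3
  rw [(hJ m).map_one_sub] at h4
  simp only [LinearMap.toAddMonoidHom_coe, LinearMap.flip_apply, sub_sub_cancel] at h1 h2 h3 h4
  refine ⟨h1, h2, ?_, ?_⟩
  · linear_combination (norm := noncomm_ring) h3
  · linear_combination (norm := noncomm_ring) h4

/-- Let `J : A × A → A` be a Jordan biderivation with `J(e,e) = 0`.
Then for all `m, m' ∈ A₁₂ = eAe'` and `n, n' ∈ A₂₁ = e'Ae` (`e' = 1 - e`):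
`J(n,n') = eJ(n,n')e' + e'J(n,n')e + [n', J(n,e)] = eJ(n,n')e' + e'J(n,n')e + [n, J(e,n')]`
and
`J(m,m') = eJ(m,m')e' + e'J(m,m')e + [J(e,m'), m] = eJ(m,m')e' + e'J(m,m')e + [J(m,e), m']`. -/
theorem jordan_biderivation_offdiagonal_pairs
    (R A : Type*) [CommRing R] [Ring A] [Algebra R A]
    -- `A` is 2-torsion free:
    (htf : ∀ x : A, x + x = 0 → x = 0)
    -- `e` is a nontrivial idempotent:
    (e : A) (he : e * e = e) (he0 : e ≠ 0) (he1 : e ≠ 1)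
    (J : A →ₗ[R] A →ₗ[R] A)
    -- `J` is a Jordan biderivation:
    (hJ1 : ∀ x y : A, J (x * x) y = x * J x y + J x y * x)
    (hJ2 : ∀ x y : A, J x (y * y) = y * J x y + J x y * y)
    -- `J(e, e) = 0`:
    (hJe : J e e = 0) :
    ∀ m m' n n' : A,
      e * m * (1 - e) = m → e * m' * (1 - e) = m' →
      (1 - e) * n * e = n → (1 - e) * n' * e = n' →
      J n n' = e * J n n' * (1 - e) + (1 - e) * J n n' * e + (n' * J n e - J n e * n') ∧
      J n n' = e * J n n' * (1 - e) + (1 - e) * J n n' * e + (n * J e n' - J e n' * n) ∧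
      J m m' = e * J m m' * (1 - e) + (1 - e) * J m m' * e + (J e m' * m - m * J e m') ∧
      J m m' = e * J m m' * (1 - e) + (1 - e) * J m m' * e + (J m e * m' - m' * J m e) :=
  jordan_biderivation_offdiagonal_pairs_general R A e he J hJ1 hJ2
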